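/- arXiv:2212.00123 — 4 statements merged into one kernel-verified Lean document; each statement's English description precedes it below -/
import Mathlib

section
/- Let n ≥ 2, k ≥ 2, and fix any orientation section σ. Then for every cyclic word W one has p←_k(π_k(W)) = π_{k−1}(W) and p→_k(π_k(W)) = π_{k−1}(W). In particular there is a ℤ-linear map p_k : M_k → M_{k−1} with p_k ∘ π_k = π_{k−1}. -/
/-!
Reading `W` periodically, every occurrence of a `(k-1)`-word `v` is preceded by exactly one
letter, so `occ v W = ∑ₐ occ (a v) W`, and only reduced words `a v` contribute because `W` is
cyclically reduced. The `p←` coefficient at `{v, v⁻¹}`, with `v = σ v`, collects every oriented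
`k`-word `w` with suffix `v` exactly once: through its suffix end if `σ w = w`, and through the
outward prefix end `v⁻¹` of `w⁻¹` otherwise. For `p→` the same argument applies to `v⁻¹`.
-/

open List

/-- A letter of the free group `F_n`: a generator index together with a sign. -/
abbrev Letter (n : ℕ) := Fin n × Bool

/-- The inverse of a letter. -/
def linv {n : ℕ} (a : Letter n) : Letter n := (a.1, !a.2)

@[simp] lemma linv_linv {n : ℕ} (a : Letter n) : linv (linv a) = a := by
  cases a with
  | mk x b => simp [linv]

/-- The (formal) inverse of a word. -/
def wInv {n : ℕ} (w : List (Letter n)) : List (Letter n) := (w.map linv).reverse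

@[simp] lemma wInv_wInv {n : ℕ} (w : List (Letter n)) : wInv (wInv w) = w := by
  simp [wInv, Function.comp_def]

/-- A word is reduced if no two consecutive letters are mutually inverse. -/
def Reduced {n : ℕ} (w : List (Letter n)) : Prop :=
  List.Chain' (fun a b => b ≠ linv a) w

/-- A word is cyclically reduced if it is reduced and its first and last letters
are not mutually inverse. -/
def CyclicallyReduced {n : ℕ} (w : List (Letter n)) : Prop :=
  Reduced w ∧ ∀ a b, w.head? = some a → w.getLast? = some b → a ≠ linv b

/-- `lpow l m` is the `m`-fold concatenation of the list `l` with itself. -/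
def lpow {α : Type*} (l : List α) : ℕ → List α
  | 0 => []
  | m + 1 => l ++ lpow l m

/-- The number of oriented occurrences of `u` in the cyclic word represented by `w`. -/
def orientedOcc {n : ℕ} (u w : List (Letter n)) : ℕ :=
  ((Finset.range w.length).filter (fun i => u <+: lpow (w.rotate i) (u.length + 1))).card

/-- `occ u w` : occurrences of the unoriented word `{u, u⁻¹}` in the cyclic word
represented by `w`. -/
def occ {n : ℕ} (u w : List (Letter n)) : ℕ :=
  orientedOcc u w + orientedOcc (wInv u) w

lemma occ_wInv {n : ℕ} (u w : List (Letter n)) : occ (wInv u) w = occ u w := by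
  simp [occ, wInv_wInv, Nat.add_comm]

/-- Occurrences of `u` as a contiguous factor of `w`. -/
def factOcc {n : ℕ} (u w : List (Letter n)) : ℕ :=
  ((Finset.range (w.length + 1)).filter (fun i => u <+: w.drop i)).card

/-- `occf u w` : occurrences of `{u, u⁻¹}` as a contiguous factor of `w`. -/
def occf {n : ℕ} (u w : List (Letter n)) : ℕ := factOcc u w + factOcc (wInv u) w

/-- Two cyclically reduced words represent the same cyclic word iff one is a
rotation of the other or of its inverse. -/
def SameCyclicWord {n : ℕ} (v w : List (Letter n)) : Prop :=
  (∃ i, w = v.rotate i) ∨ (∃ i, w = (wInv v).rotate i)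

/-- Cyclic reduction: repeatedly delete the first and last letter while they are
mutually inverse. -/
def cyclicReduce {n : ℕ} : List (Letter n) → List (Letter n)
  | [] => []
  | a :: rest =>
    if rest.getLast? = some (linv a) then cyclicReduce rest.dropLast
    else a :: rest
  termination_by w => w.length
  decreasing_by simp [List.length_dropLast]

/-- Oriented reduced words of length `k`. -/
structure RW (n k : ℕ) where
  val : List (Letter n)
  red : Reduced val
  len : val.length = k

instance (n k : ℕ) : DecidableEq (RW n k) := fun a b =>
  decidable_of_iff (a.val = b.val)
    ⟨fun h => by cases a; cases b; cases h; rfl, fun h => congrArg RW.val h⟩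

/-- Identify a reduced word with its inverse: the quotient is the set `W_k` of
unoriented words of length `k`. -/
instance uwSetoid (n k : ℕ) : Setoid (RW n k) where
  r u v := v.val = u.val ∨ v.val = wInv u.val
  iseqv := by
    refine ⟨fun u => Or.inl rfl, ?_, ?_⟩
    · rintro u v (h | h)
      · exact Or.inl h.symm
      · exact Or.inr (by rw [h, wInv_wInv])
    · rintro u v w (h1 | h1) (h2 | h2)
      · exact Or.inl (h2.trans h1)
      · exact Or.inr (h2.trans (congrArg wInv h1))
      · exact Or.inr (h2.trans h1)
      · exact Or.inl (by rw [h2, h1, wInv_wInv])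

instance (n k : ℕ) : ∀ a b : RW n k, Decidable (a ≈ b) := fun a b =>
  show Decidable (b.val = a.val ∨ b.val = wInv a.val) from inferInstance

/-- `W_k` : unoriented reduced words of length `k`. -/
abbrev UW (n k : ℕ) := Quotient (uwSetoid n k)

def toVec (n k : ℕ) (u : RW n k) : List.Vector (Letter n) k := ⟨u.val, u.len⟩

lemma toVec_inj (n k : ℕ) : Function.Injective (toVec n k) := by
  intro a b h
  have h' : a.val = b.val := congrArg Subtype.val h
  cases a; cases b; cases h'; rfl

noncomputable instance (n k : ℕ) : Fintype (RW n k) :=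
  Fintype.ofInjective _ (toVec_inj n k)

noncomputable example (n k : ℕ) : Fintype (UW n k) := inferInstance
noncomputable example (n k : ℕ) : DecidableEq (UW n k) := inferInstance

/-- `M_k` : the free ℤ-module on `W_k`, realized as functions `W_k → ℤ`. -/
abbrev Mk (n k : ℕ) := UW n k → ℤ

/-- `π_k` of the cyclic word represented by `w` : the vector of occurrence counts
of unoriented words of length `k`. -/
def pik (n k : ℕ) (w : List (Letter n)) : Mk n k :=
  Quotient.lift (fun u : RW n k => (occ u.val w : ℤ)) (by
    intro a b hab
    have h : occ a.val w = occ b.val w := by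
      rcases hab with h | h
      · rw [h]
      · rw [h, occ_wInv]
    show ((occ a.val w : ℕ) : ℤ) = ((occ b.val w : ℕ) : ℤ)
    rw [h])

lemma Reduced.drop' {n : ℕ} {w : List (Letter n)} (h : Reduced w) (m : ℕ) :
    Reduced (w.drop m) :=
  List.IsChain.suffix h (List.drop_suffix m w)

lemma Reduced.dropLast' {n : ℕ} {w : List (Letter n)} (h : Reduced w) :
    Reduced w.dropLast :=
  List.IsChain.prefix h (List.dropLast_prefix w)

/-- The unoriented `(k-1)`-suffix of an oriented word of length `k`. -/
def sufC {n k : ℕ} (w : RW n k) : UW n (k - 1) :=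
  Quotient.mk (uwSetoid n (k - 1)) ⟨w.val.drop 1, w.red.drop' 1, by simp [w.len]⟩

/-- The unoriented `(k-1)`-prefix of an oriented word of length `k`. -/
def preC {n k : ℕ} (w : RW n k) : UW n (k - 1) :=
  Quotient.mk (uwSetoid n (k - 1)) ⟨w.val.dropLast, w.red.dropLast', by simp [w.len]⟩

/-- Matrix of `p←_k` w.r.t. the orientation section `σ`: a basis element `w̄` of `M_k`
is sent to the sum of the unoriented `(k-1)`-words at its outward-pointing ends. -/
noncomputable def AOut (n k : ℕ) (σ : List (Letter n) → List (Letter n)) :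
    Matrix (UW n (k - 1)) (UW n k) ℤ := fun ub wb =>
  ∑ w : RW n k,
    if Quotient.mk (uwSetoid n k) w = wb ∧ σ w.val = w.val then
      ((if sufC w = ub ∧ σ (w.val.drop 1) = w.val.drop 1 then 1 else 0) +
       (if preC w = ub ∧ σ (w.val.dropLast) = wInv (w.val.dropLast) then 1 else 0))
    else 0

/-- Matrix of `p→_k` : inward-pointing ends. -/
noncomputable def AIn (n k : ℕ) (σ : List (Letter n) → List (Letter n)) :
    Matrix (UW n (k - 1)) (UW n k) ℤ := fun ub wb =>
  ∑ w : RW n k,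
    if Quotient.mk (uwSetoid n k) w = wb ∧ σ w.val = w.val then
      ((if sufC w = ub ∧ σ (w.val.drop 1) = wInv (w.val.drop 1) then 1 else 0) +
       (if preC w = ub ∧ σ (w.val.dropLast) = w.val.dropLast then 1 else 0))
    else 0

/-- `p←_k : M_k → M_{k-1}`. -/
noncomputable def pOut (n k : ℕ) (σ : List (Letter n) → List (Letter n)) :
    Mk n k →ₗ[ℤ] Mk n (k - 1) := (AOut n k σ).mulVecLin

/-- `p→_k : M_k → M_{k-1}`. -/
noncomputable def pIn (n k : ℕ) (σ : List (Letter n) → List (Letter n)) :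
    Mk n k →ₗ[ℤ] Mk n (k - 1) := (AIn n k σ).mulVecLin

open Finset

section Window

variable {α : Type*}

def window (f : ℕ → α) (i m : ℕ) : List α := (List.range m).map fun j => f (i + j)

lemma window_succ (f : ℕ → α) (i m : ℕ) : window f i (m + 1) = f i :: window f (i + 1) m := by
  simp [window, List.range_succ_eq_map, Nat.add_assoc, Nat.add_comm 1]

lemma window_succ_eq_concat (f : ℕ → α) (i m : ℕ) :
    window f i (m + 1) = window f i m ++ [f (i + m)] := by
  simp [window, List.range_succ]

lemma window_eq_iff (f : ℕ → α) (i : ℕ) (u : List α) :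
    window f i u.length = u ↔ ∀ j (hj : j < u.length), f (i + j) = u[j] := by
  simp [List.ext_getElem_iff, window]

lemma isChain_window {R : α → α → Prop} {f : ℕ → α} (hf : ∀ j, R (f j) (f (j + 1)))
    (i m : ℕ) : List.IsChain R (window f i m) := by
  induction m generalizing i with
  | zero => simp [window]
  | succ m ih =>
    cases m with
    | zero => simp [window]
    | succ m =>
      have hchain := ih (i + 1)
      simp only [window_succ] at hchain ⊢
      exact hchain.cons_cons (hf i)

lemma window_add_period {f : ℕ → α} {N : ℕ} (hf : Function.Periodic f N) (i m : ℕ) :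
    window f (i + N) m = window f i m := by
  simp [window, Nat.add_right_comm i N, hf _]

variable [DecidableEq α]

def windowCount (f : ℕ → α) (N : ℕ) (u : List α) : ℕ :=
  #{i ∈ Finset.range N | window f i u.length = u}

lemma windowCount_eq_zero {R : α → α → Prop} {f : ℕ → α} (hf : ∀ j, R (f j) (f (j + 1)))
    (N : ℕ) {u : List α} (hu : ¬ List.IsChain R u) : windowCount f N u = 0 := by
  refine Finset.card_eq_zero.2 (Finset.filter_eq_empty_iff.2 fun i _ hi => hu ?_)
  exact hi ▸ isChain_window hf i u.length

lemma windowCount_eq_sum_concat [Fintype α] (f : ℕ → α) (N : ℕ) (u : List α) :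
    windowCount f N u = ∑ a, windowCount f N (u ++ [a]) := by
  simp only [windowCount, card_filter]
  rw [Finset.sum_comm]
  refine Finset.sum_congr rfl fun i _ => ?_
  simp [window_succ_eq_concat, List.append_singleton_inj, ite_and]

lemma windowCount_eq_sum_cons [Fintype α] {f : ℕ → α} {N : ℕ} (hf : Function.Periodic f N)
    (u : List α) : windowCount f N u = ∑ a, windowCount f N (a :: u) := by
  simp only [windowCount, card_filter]
  rw [Finset.sum_comm]
  set g : ℕ → ℕ := fun i => if window f i u.length = u then 1 else 0 with hg
  have hshift : ∑ i ∈ range N, g (i + 1) = ∑ i ∈ range N, g i := by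
    have h1 := Finset.sum_range_succ g N
    have h2 := Finset.sum_range_succ' g N
    have hN : g N = g 0 := by simp only [hg, ← window_add_period hf 0, Nat.zero_add]
    omega
  rw [← hshift]
  refine Finset.sum_congr rfl fun i _ => ?_
  simp [g, window_succ, ite_and]

end Window

section CyclicRead

variable {α : Type*}

@[simp] lemma length_lpow (l : List α) (m : ℕ) : (lpow l m).length = m * l.length := by
  induction m with
  | zero => simp [lpow]
  | succ m ih => simp [lpow, ih, Nat.succ_mul, Nat.add_comm]

lemma getElem_lpow (l : List α) (m j : ℕ) (hj : j < (lpow l m).length) :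
    (lpow l m)[j] = l[j % l.length]'(Nat.mod_lt _ (by grind [length_lpow])) := by
  induction m generalizing j with
  | zero => simp [lpow] at hj
  | succ m ih =>
    have hsucc : lpow l (m + 1) = l ++ lpow l m := rfl
    by_cases h : j < l.length
    · simp only [hsucc, List.getElem_append_left h, Nat.mod_eq_of_lt h]
    · simp only [hsucc, List.getElem_append_right (not_lt.1 h), ih,
        ← Nat.mod_eq_sub_mod (not_lt.1 h)]

def cyclicRead (w : List α) (hw : w ≠ []) (j : ℕ) : α :=
  w[j % w.length]'(Nat.mod_lt _ (List.length_pos_iff.2 hw))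

lemma periodic_cyclicRead (w : List α) (hw : w ≠ []) :
    Function.Periodic (cyclicRead w hw) w.length := by
  intro j
  simp [cyclicRead]

lemma prefix_lpow_rotate_iff {w : List α} (hw : w ≠ []) (u : List α) (i : ℕ) :
    u <+: lpow (w.rotate i) (u.length + 1) ↔ window (cyclicRead w hw) i u.length = u := by
  have hN := List.length_pos_iff.2 hw
  rw [List.prefix_iff_getElem, window_eq_iff]
  refine ⟨fun ⟨_, h⟩ j hj => ?_, fun h => ⟨?_, fun j hj => ?_⟩⟩
  · rw [h j hj, getElem_lpow, List.getElem_rotate]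
    simp [cyclicRead, Nat.add_comm i j]
  · simp only [length_lpow, List.length_rotate, Nat.succ_mul]
    nlinarith
  · rw [← h j hj, getElem_lpow, List.getElem_rotate]
    simp [cyclicRead, Nat.add_comm i j]

end CyclicRead

section Occurrences

variable {n : ℕ}

lemma reduced_wInv_iff {w : List (Letter n)} : Reduced (wInv w) ↔ Reduced w := by
  show List.IsChain _ _ ↔ List.IsChain _ _
  simp only [wInv, List.isChain_reverse, List.isChain_map, linv_linv, ne_comm]

lemma wInv_cons (a : Letter n) (u : List (Letter n)) :
    wInv (a :: u) = wInv u ++ [linv a] := by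
  simp [wInv]

lemma CyclicallyReduced.cyclicRead_succ_ne {w : List (Letter n)} (h : CyclicallyReduced w)
    (hw : w ≠ []) (j : ℕ) : cyclicRead w hw (j + 1) ≠ linv (cyclicRead w hw j) := by
  have hN := List.length_pos_iff.2 hw
  simp only [cyclicRead, ← Nat.mod_add_mod j w.length 1]
  rcases Nat.lt_or_ge (j % w.length + 1) w.length with hlt | hge
  · simp only [Nat.mod_eq_of_lt hlt]
    exact List.isChain_iff_getElem.1 h.1 _ hlt
  · have hlast : j % w.length + 1 = w.length := by have := Nat.mod_lt j hN; omega
    simp only [hlast, Nat.mod_self]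
    refine h.2 _ _ ?_ ?_
    · simp [List.head?_eq_getElem?, hN]
    · simp [List.getLast?_eq_getElem?, show j % w.length = w.length - 1 by omega]

lemma orientedOcc_eq_windowCount (u : List (Letter n)) {w : List (Letter n)} (hw : w ≠ []) :
    orientedOcc u w = windowCount (cyclicRead w hw) w.length u := by
  unfold orientedOcc windowCount
  simp only [prefix_lpow_rotate_iff hw]

lemma orientedOcc_eq_zero {u w : List (Letter n)} (hu : ¬ Reduced u) (hw : w ≠ [])
    (hcr : CyclicallyReduced w) : orientedOcc u w = 0 := by
  rw [orientedOcc_eq_windowCount u hw]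
  exact windowCount_eq_zero (hcr.cyclicRead_succ_ne hw) _ hu

lemma occ_eq_zero {u w : List (Letter n)} (hu : ¬ Reduced u) (hw : w ≠ [])
    (hcr : CyclicallyReduced w) : occ u w = 0 := by
  rw [occ, orientedOcc_eq_zero hu hw hcr, orientedOcc_eq_zero (reduced_wInv_iff.not.2 hu) hw hcr]

lemma sum_occ_cons (v : List (Letter n)) {w : List (Letter n)} (hw : w ≠ []) :
    ∑ a, occ (a :: v) w = occ v w := by
  have hinv : ∑ a, orientedOcc (wInv v ++ [linv a]) w = ∑ a, orientedOcc (wInv v ++ [a]) w :=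
    Fintype.sum_equiv (Function.Involutive.toPerm linv linv_linv) _ _ fun _ => rfl
  simp only [occ, wInv_cons, Finset.sum_add_distrib]
  rw [hinv]
  simp only [orientedOcc_eq_windowCount _ hw]
  rw [← windowCount_eq_sum_concat, ← windowCount_eq_sum_cons (periodic_cyclicRead w hw)]

end Occurrences

section ReducedWords

variable {n k : ℕ}

lemma linv_ne_self (a : Letter n) : linv a ≠ a := by
  simp [linv, Prod.ext_iff]

/-- A word equal to its inverse has, at its midpoint, either a letter equal to its own inverse
(odd length) or two adjacent mutually inverse letters (even length). -/
lemma wInv_ne_self {w : List (Letter n)} (hred : Reduced w) (hne : w ≠ []) : wInv w ≠ w := by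
  intro h
  have hL := List.length_pos_iff.2 hne
  have hpal : ∀ j (hj : j < w.length), w[j] = linv w[w.length - 1 - j] := fun j hj => by
    rw [List.getElem_of_eq h.symm hj]
    simp [wInv, List.getElem_reverse]
  rcases Nat.even_or_odd w.length with ⟨m, hm⟩ | ⟨m, hm⟩
  · refine List.isChain_iff_getElem.1 hred (m - 1) (by omega) ?_
    simpa only [show w.length - 1 - (m - 1 + 1) = m - 1 by omega] using hpal (m - 1 + 1) (by omega)
  · refine linv_ne_self w[m] ?_
    simpa only [show w.length - 1 - m = m by omega] using (hpal m (by omega)).symm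

lemma RW.val_injective : Function.Injective (RW.val (n := n) (k := k)) := by
  rintro ⟨u, _, _⟩ ⟨v, _, _⟩ rfl
  rfl

lemma RW.val_ne_nil (hk : 0 < k) (w : RW n k) : w.val ≠ [] :=
  List.ne_nil_of_length_pos (by rw [w.len]; exact hk)

def RW.inv (w : RW n k) : RW n k :=
  ⟨wInv w.val, reduced_wInv_iff.2 w.red, by simp [wInv, w.len]⟩

lemma RW.inv_involutive : Function.Involutive (RW.inv (n := n) (k := k)) :=
  fun _ => RW.val_injective (wInv_wInv _)

lemma sum_drop_one_eq_sum_cons {v : List (Letter n)} (hk : v.length + 1 = k)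
    (g : List (Letter n) → ℤ) (hg : ∀ u, ¬ Reduced u → g u = 0) :
    ∑ w : RW n k, (if w.val.drop 1 = v then g w.val else 0) = ∑ a, g (a :: v) := by
  have hcons : ∀ w : RW n k, w.val.drop 1 = v →
      w.val = w.val.head (w.val_ne_nil (by omega)) :: v :=
    fun w hw => (List.cons_head_tail _).symm.trans (by rw [← List.drop_one, hw])
  classical
  rw [← Finset.sum_filter, ← Finset.sum_filter_of_ne (p := fun a => Reduced (a :: v))
    fun a _ ha => by_contra fun h => ha (hg _ h)]
  refine Finset.sum_bij' (fun w _ => w.val.head (w.val_ne_nil (by omega)))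
    (fun a ha => ⟨a :: v, (Finset.mem_filter.1 ha).2, by simp [hk]⟩) ?_ ?_ ?_ ?_ ?_
  · intro w hw
    simpa [← hcons w (Finset.mem_filter.1 hw).2] using w.red
  · simp
  · intro w hw
    exact RW.val_injective (hcons w (Finset.mem_filter.1 hw).2).symm
  · simp
  · intro w hw
    rw [← hcons w (Finset.mem_filter.1 hw).2]

lemma sum_occ_drop_one {v w₀ : List (Letter n)} (hk : v.length + 1 = k) (hw₀ : w₀ ≠ [])
    (hcr : CyclicallyReduced w₀) :
    ∑ w : RW n k, (if w.val.drop 1 = v then (occ w.val w₀ : ℤ) else 0) = occ v w₀ := by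
  rw [sum_drop_one_eq_sum_cons hk (fun u => (occ u w₀ : ℤ))
    fun u hu => by simp [occ_eq_zero hu hw₀ hcr], ← sum_occ_cons v hw₀]
  push_cast
  rfl

end ReducedWords

lemma sum_ite_add_comp_involutive {β M : Type*} [Fintype β] [AddCommMonoid M] {ι : β → β}
    (hι : Function.Involutive ι) (S : β → Prop) [DecidablePred S] (hS : ∀ b, S (ι b) ↔ ¬ S b)
    (h : β → M) : ∑ b, (if S b then h b + h (ι b) else 0) = ∑ b, h b := by
  have hswap : ∑ b, (if S b then h (ι b) else 0) = ∑ b, (if ¬ S b then h b else 0) :=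
    Fintype.sum_equiv (hι.toPerm ι) _ _ fun b => by simp [hS]
  calc ∑ b, (if S b then h b + h (ι b) else 0)
      = ∑ b, (if S b then h b else 0) + ∑ b, (if ¬ S b then h b else 0) := by
        rw [← hswap, ← Finset.sum_add_distrib]
        simp only [ite_add_zero]
    _ = ∑ b, h b := by
        rw [← Finset.sum_add_distrib]
        exact Finset.sum_congr rfl fun b _ => by split_ifs <;> simp

lemma mulVec_apply_eq_sum_of_fiber {ι β γ R : Type*} [Fintype β] [Fintype γ] [DecidableEq γ]
    [NonUnitalNonAssocSemiring R] (q : β → γ) (C : β → Prop) [DecidablePred C] (F : β → R)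
    (A : Matrix ι γ R) (i : ι) (hA : ∀ c, A i c = ∑ b, if q b = c ∧ C b then F b else 0)
    (x : γ → R) : A.mulVec x i = ∑ b, if C b then F b * x (q b) else 0 := by
  simp only [Matrix.mulVec, dotProduct, hA, Finset.sum_mul]
  rw [Finset.sum_comm]
  refine Finset.sum_congr rfl fun b _ => ?_
  simp [ite_and]

structure IsOrientationSection {n : ℕ} (σ : List (Letter n) → List (Letter n)) : Prop where
  eq_or_eq_wInv : ∀ u, σ u = u ∨ σ u = wInv u
  apply_wInv : ∀ u, σ (wInv u) = σ u

namespace IsOrientationSection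

variable {n m : ℕ} {σ : List (Letter n) → List (Letter n)} (hσ : IsOrientationSection σ)
include hσ

lemma apply_apply (u : List (Letter n)) : σ (σ u) = σ u := by
  rcases hσ.eq_or_eq_wInv u with h | h <;> rw [h]
  · exact h
  · rw [hσ.apply_wInv, h]

lemma apply_eq_of_mk_eq {s u : RW n m}
    (h : Quotient.mk (uwSetoid n m) s = Quotient.mk (uwSetoid n m) u) : σ s.val = σ u.val := by
  rcases Quotient.exact h with h | h <;> rw [h]
  exact (hσ.apply_wInv _).symm

lemma mk_eq_of_val_eq (s u : RW n m) (h : s.val = σ u.val ∨ s.val = wInv (σ u.val)) :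
    Quotient.mk (uwSetoid n m) s = Quotient.mk (uwSetoid n m) u := by
  refine Quotient.sound ?_
  show u.val = s.val ∨ u.val = wInv s.val
  rcases hσ.eq_or_eq_wInv u.val with hu | hu <;> rcases h with h | h <;> simp [h, hu]

lemma mk_eq_and_apply_eq_self_iff (s u : RW n m) :
    (Quotient.mk (uwSetoid n m) s = Quotient.mk (uwSetoid n m) u ∧ σ s.val = s.val) ↔
      s.val = σ u.val := by
  refine ⟨fun ⟨hsu, hs⟩ => hs ▸ hσ.apply_eq_of_mk_eq hsu, fun h => ⟨?_, ?_⟩⟩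
  · exact hσ.mk_eq_of_val_eq s u (Or.inl h)
  · rw [h, hσ.apply_apply]

lemma mk_eq_and_apply_eq_wInv_iff (s u : RW n m) :
    (Quotient.mk (uwSetoid n m) s = Quotient.mk (uwSetoid n m) u ∧ σ s.val = wInv s.val) ↔
      s.val = wInv (σ u.val) := by
  refine ⟨fun ⟨hsu, hs⟩ => ?_, fun h => ⟨?_, ?_⟩⟩
  · rw [← hσ.apply_eq_of_mk_eq hsu, hs, wInv_wInv]
  · exact hσ.mk_eq_of_val_eq s u (Or.inr h)
  · rw [h, hσ.apply_wInv, hσ.apply_apply, wInv_wInv]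

lemma length_apply (u : List (Letter n)) : (σ u).length = u.length := by
  rcases hσ.eq_or_eq_wInv u with h | h <;> simp [h, wInv]

lemma occ_apply (u w : List (Letter n)) : occ (σ u) w = occ u w := by
  rcases hσ.eq_or_eq_wInv u with h | h <;> rw [h]
  exact occ_wInv u w

end IsOrientationSection

section Projections

variable {n k : ℕ} {σ : List (Letter n) → List (Letter n)}

lemma drop_one_wInv (u : List (Letter n)) : (wInv u).drop 1 = wInv u.dropLast := by
  simp [wInv, List.drop_one, List.tail_reverse, List.map_dropLast]

lemma pik_mk (w : List (Letter n)) (u : RW n k) :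
    pik n k w (Quotient.mk _ u) = occ u.val w := rfl

lemma pOut_apply (hσ : IsOrientationSection σ) (x : Mk n k) (u : RW n (k - 1)) :
    pOut n k σ x (Quotient.mk _ u) = ∑ w : RW n k, if σ w.val = w.val then
      ((if w.val.drop 1 = σ u.val then 1 else 0) +
        (if w.val.dropLast = wInv (σ u.val) then 1 else 0)) * x (Quotient.mk _ w) else 0 := by
  rw [pOut, Matrix.mulVecLin_apply]
  refine mulVec_apply_eq_sum_of_fiber _ _ _ _ _ (fun c => ?_) x
  simp only [AOut, sufC, preC, hσ.mk_eq_and_apply_eq_self_iff, hσ.mk_eq_and_apply_eq_wInv_iff]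

lemma pIn_apply (hσ : IsOrientationSection σ) (x : Mk n k) (u : RW n (k - 1)) :
    pIn n k σ x (Quotient.mk _ u) = ∑ w : RW n k, if σ w.val = w.val then
      ((if w.val.drop 1 = wInv (σ u.val) then 1 else 0) +
        (if w.val.dropLast = σ u.val then 1 else 0)) * x (Quotient.mk _ w) else 0 := by
  rw [pIn, Matrix.mulVecLin_apply]
  refine mulVec_apply_eq_sum_of_fiber _ _ _ _ _ (fun c => ?_) x
  simp only [AIn, sufC, preC, hσ.mk_eq_and_apply_eq_self_iff, hσ.mk_eq_and_apply_eq_wInv_iff]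

lemma sum_section_ends (hσ : IsOrientationSection σ) (hk : 0 < k) (v : List (Letter n))
    (g : List (Letter n) → ℤ) (hg : ∀ u, g (wInv u) = g u) :
    ∑ w : RW n k, (if σ w.val = w.val then
      ((if w.val.drop 1 = v then 1 else 0) + (if w.val.dropLast = wInv v then 1 else 0)) *
        g w.val else 0) =
      ∑ w : RW n k, if w.val.drop 1 = v then g w.val else 0 := by
  have hwInv : Function.Involutive (wInv (n := n)) := wInv_wInv
  rw [← sum_ite_add_comp_involutive RW.inv_involutive (fun w : RW n k => σ w.val = w.val) ?_
    fun w => if w.val.drop 1 = v then g w.val else 0]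
  · refine Finset.sum_congr rfl fun w _ => ?_
    simp only [RW.inv, drop_one_wInv, hg, hwInv.eq_iff]
    split_ifs <;> ring
  · intro w
    have hne := wInv_ne_self w.red (w.val_ne_nil hk)
    simp only [RW.inv, hσ.apply_wInv]
    rcases hσ.eq_or_eq_wInv w.val with h | h <;> simp [h, hne, hne.symm]

end Projections

section Compatibility

variable {n k : ℕ} {σ : List (Letter n) → List (Letter n)} {w₀ : List (Letter n)}

lemma pOut_pik (hσ : IsOrientationSection σ) (hk : 0 < k) (hw₀ : w₀ ≠ [])
    (hcr : CyclicallyReduced w₀) : pOut n k σ (pik n k w₀) = pik n (k - 1) w₀ := by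
  funext ub
  induction ub using Quotient.inductionOn with | h u => ?_
  have hv : (σ u.val).length + 1 = k := by rw [hσ.length_apply, u.len]; omega
  simp only [pOut_apply hσ, pik_mk]
  rw [sum_section_ends hσ hk _ (fun u => (occ u w₀ : ℤ)) (by simp [occ_wInv]),
    sum_occ_drop_one hv hw₀ hcr, hσ.occ_apply]

lemma pIn_pik (hσ : IsOrientationSection σ) (hk : 0 < k) (hw₀ : w₀ ≠ [])
    (hcr : CyclicallyReduced w₀) : pIn n k σ (pik n k w₀) = pik n (k - 1) w₀ := by
  funext ub
  induction ub using Quotient.inductionOn with | h u => ?_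
  have hv : (wInv (σ u.val)).length + 1 = k := by simp [wInv, hσ.length_apply, u.len]; omega
  have hends := sum_section_ends hσ hk (wInv (σ u.val)) (fun u => (occ u w₀ : ℤ))
    (by simp [occ_wInv])
  rw [wInv_wInv] at hends
  simp only [pIn_apply hσ, pik_mk]
  rw [hends, sum_occ_drop_one hv hw₀ hcr, occ_wInv, hσ.occ_apply]

end Compatibility

theorem pk_compat_pik_general (n k : ℕ) (hk : 2 ≤ k)
    (σ : List (Letter n) → List (Letter n))
    (hσ1 : ∀ u : List (Letter n), σ u = u ∨ σ u = wInv u)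
    (hσ2 : ∀ u : List (Letter n), σ (wInv u) = σ u) :
    (∀ w : List (Letter n), w ≠ [] → CyclicallyReduced w →
        pOut n k σ (pik n k w) = pik n (k - 1) w ∧
        pIn n k σ (pik n k w) = pik n (k - 1) w) ∧
    ∃ p : Mk n k →ₗ[ℤ] Mk n (k - 1),
      ∀ w : List (Letter n), w ≠ [] → CyclicallyReduced w →
        p (pik n k w) = pik n (k - 1) w := by
  have hσ : IsOrientationSection σ := ⟨hσ1, hσ2⟩
  have hk₀ : 0 < k := by omega
  have hcompat : ∀ w : List (Letter n), w ≠ [] → CyclicallyReduced w →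
      pOut n k σ (pik n k w) = pik n (k - 1) w ∧ pIn n k σ (pik n k w) = pik n (k - 1) w :=
    fun w hw hcr => ⟨pOut_pik hσ hk₀ hw hcr, pIn_pik hσ hk₀ hw hcr⟩
  exact ⟨hcompat, pOut n k σ, fun w hw hcr => (hcompat w hw hcr).1⟩

/-- For `n ≥ 2`, `k ≥ 2` and any orientation section `σ`, for every
cyclic word `W` one has `p←_k (π_k W) = π_{k-1} W` and `p→_k (π_k W) = π_{k-1} W`;
in particular there is a ℤ-linear map `p_k : M_k → M_{k-1}` with `p_k ∘ π_k = π_{k-1}`. -/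
theorem pk_compat_pik (n k : ℕ) (hn : 2 ≤ n) (hk : 2 ≤ k)
    (σ : List (Letter n) → List (Letter n))
    (hσ1 : ∀ u : List (Letter n), σ u = u ∨ σ u = wInv u)
    (hσ2 : ∀ u : List (Letter n), σ (wInv u) = σ u) :
    (∀ w : List (Letter n), w ≠ [] → CyclicallyReduced w →
        pOut n k σ (pik n k w) = pik n (k - 1) w ∧
        pIn n k σ (pik n k w) = pik n (k - 1) w) ∧
    ∃ p : Mk n k →ₗ[ℤ] Mk n (k - 1),
      ∀ w : List (Letter n), w ≠ [] → CyclicallyReduced w →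
        p (pik n k w) = pik n (k - 1) w :=
  pk_compat_pik_general n k hk σ hσ1 hσ2
end

section
/- A nonempty cyclically reduced word w is a proper power (i.e., w = v^m as a concatenation of letter sequences for some nonempty word v and some m ≥ 2) if and only if every cyclic rotation w' of w can be written as a concatenation w' = t ++ v ++ t with t a nonempty sequence (v possibly empty). -/
open List

/-!
If `w = vᵐ` with `m ≥ 2`, every rotation of `w` is a power `v'ᵐ` of a rotation `v'` of `v`,
which begins and ends with `v'`. Conversely, fix any linear order on the letters and let
`u = t ++ v ++ t` be the lexicographically least rotation of `w`. Comparing `u` with its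
rotations `v ++ t ++ t` and `t ++ t ++ v` gives `t ++ v ≤ v ++ t` and `v ++ t ≤ t ++ v`, so `t`
and `v` commute and are therefore powers of a common word `z`; then `u = z^(2a + b)` with
`a ≥ 1`, and `w`, being a rotation of `u`, is the same power of a rotation of `z`.
-/

section Lpow

variable {α : Type*}

@[simp] lemma lpow_zero (l : List α) : lpow l 0 = [] := rfl

lemma lpow_succ (l : List α) (m : ℕ) : lpow l (m + 1) = l ++ lpow l m := rfl

@[simp] lemma lpow_nil (m : ℕ) : lpow ([] : List α) m = [] := by
  induction m <;> simp [lpow_succ, *]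

lemma lpow_add (l : List α) (a b : ℕ) : lpow l (a + b) = lpow l a ++ lpow l b := by
  induction a with
  | zero => simp
  | succ a ih => rw [Nat.add_right_comm, lpow_succ, lpow_succ, ih, append_assoc]

lemma lpow_succ' (l : List α) (m : ℕ) : lpow l (m + 1) = lpow l m ++ l := by
  rw [lpow_add]
  simp [lpow_succ]

lemma lpow_eq_nil_iff {l : List α} {m : ℕ} : lpow l m = [] ↔ l = [] ∨ m = 0 := by
  rw [← length_eq_zero_iff]
  induction m <;> simp_all [lpow_succ]

lemma lpow_append_append (s t : List α) (m : ℕ) :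
    lpow (s ++ t) m ++ s = s ++ lpow (t ++ s) m := by
  induction m with
  | zero => simp
  | succ m ih => simp only [lpow_succ, append_assoc, ih]

lemma lpow_rotate_one (l : List α) (m : ℕ) : (lpow l m).rotate 1 = lpow (l.rotate 1) m := by
  rcases l with _ | ⟨a, l⟩
  · simp
  rcases m with _ | m
  · simp
  simpa [lpow_succ] using lpow_append_append [a] l m

lemma lpow_rotate (l : List α) (m j : ℕ) : (lpow l m).rotate j = lpow (l.rotate j) m := by
  induction j with
  | zero => simp
  | succ j ih => rw [← rotate_rotate, ih, lpow_rotate_one, rotate_rotate]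

lemma exists_lpow_of_append_comm {s t : List α} (h : s ++ t = t ++ s) :
    ∃ z a b, s = lpow z a ∧ t = lpow z b := by
  induction hn : s.length + t.length using Nat.strong_induction_on generalizing s t with
  | _ n ih =>
  wlog hst : s.length ≤ t.length generalizing s t
  · obtain ⟨z, a, b, hs, ht⟩ := this h.symm (by omega) (by omega)
    exact ⟨z, b, a, ht, hs⟩
  rcases eq_or_ne s [] with rfl | hs
  · exact ⟨t, 0, 1, rfl, by simp [lpow_succ]⟩
  obtain ⟨r, rfl⟩ : s <+: t :=
    prefix_of_prefix_length_le (prefix_append s t) (h ▸ prefix_append t s) hst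
  have hsr : s ++ r = r ++ s := by simpa using h
  have hlen : s.length + r.length < n := by simp [← hn, length_pos_iff.mpr hs]
  obtain ⟨z, a, b, rfl, rfl⟩ := ih _ hlen hsr rfl
  exact ⟨z, a, a + b, rfl, (lpow_add z a b).symm⟩

end Lpow

section Lex

variable {α : Type*} [LinearOrder α]

lemma append_lt_append_of_lt_of_length_eq {x y : List α} (c d : List α) (h : x < y)
    (hlen : x.length = y.length) : x ++ c < y ++ d := by
  induction h with
  | nil => simp at hlen
  | cons _ ih => exact Lex.cons (ih (by simpa using hlen))
  | rel h => exact Lex.rel h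

lemma le_of_append_le_append_of_length_eq {x y c d : List α} (hlen : x.length = y.length)
    (h : x ++ c ≤ y ++ d) : x ≤ y :=
  le_of_not_gt fun hlt => (append_lt_append_of_lt_of_length_eq d c hlt hlen.symm).not_ge h

lemma le_of_append_le_append_left {c x y : List α} (h : c ++ x ≤ c ++ y) : x ≤ y :=
  le_of_not_gt fun hlt => (append_left_lt hlt).not_ge h

lemma append_comm_of_le_rotations {t v : List α} (h₁ : t ++ v ++ t ≤ v ++ t ++ t)
    (h₂ : t ++ v ++ t ≤ t ++ t ++ v) : t ++ v = v ++ t := by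
  refine le_antisymm (le_of_append_le_append_of_length_eq (by simp [Nat.add_comm]) h₁) ?_
  exact le_of_append_le_append_left (c := t) (by simpa only [append_assoc] using h₂)

lemma exists_isRotated_forall_le (l : List α) : ∃ u, u ~r l ∧ ∀ u', u' ~r l → u ≤ u' := by
  obtain ⟨u, hu, hmin⟩ := Set.exists_min_image {u | u ~r l} id
    ((cyclicPermutations l).finite_toSet.subset fun u hu => mem_cyclicPermutations_iff.mpr hu)
    ⟨l, IsRotated.refl l⟩
  exact ⟨u, hu, hmin⟩

end Lex

section Bordered

variable {α : Type*}

lemma exists_bordered_rotate_lpow {v : List α} (hv : v ≠ []) {m : ℕ} (hm : 2 ≤ m) (i : ℕ) :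
    ∃ t u : List α, t ≠ [] ∧ (lpow v m).rotate i = t ++ u ++ t := by
  obtain ⟨k, rfl⟩ : ∃ k, m = k + 2 := ⟨m - 2, by omega⟩
  refine ⟨v.rotate i, lpow (v.rotate i) k, by simpa using hv, ?_⟩
  rw [lpow_rotate, lpow_succ, lpow_succ', append_assoc]

lemma exists_lpow_of_forall_rotate_bordered {w : List α}
    (h : ∀ i : ℕ, ∃ t v : List α, t ≠ [] ∧ w.rotate i = t ++ v ++ t) :
    ∃ z m, z ≠ [] ∧ 2 ≤ m ∧ w = lpow z m := by
  let := IsWellOrder.linearOrder (WellOrderingRel (α := α))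
  obtain ⟨u, huw, hmin⟩ := exists_isRotated_forall_le w
  obtain ⟨i, rfl⟩ := huw.symm
  have hle (x y : List α) (hxy : w.rotate i = x ++ y) : w.rotate i ≤ y ++ x :=
    hmin _ (isRotated_append.symm.trans (hxy ▸ huw))
  obtain ⟨t, v, ht, hu⟩ := h i
  have h₁ : t ++ v ++ t ≤ v ++ t ++ t := by
    simpa only [hu, append_assoc] using hle t (v ++ t) (by rw [hu, append_assoc])
  have h₂ : t ++ v ++ t ≤ t ++ t ++ v := by
    simpa only [hu, append_assoc] using hle (t ++ v) t hu
  obtain ⟨z, a, b, rfl, rfl⟩ := exists_lpow_of_append_comm (append_comm_of_le_rotations h₁ h₂)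
  obtain ⟨j, hj⟩ := huw
  obtain ⟨hz, ha⟩ : z ≠ [] ∧ a ≠ 0 := by simpa [lpow_eq_nil_iff, not_or] using ht
  refine ⟨z.rotate j, a + b + a, by simpa using hz, by omega, ?_⟩
  rw [← hj, hu, ← lpow_add, ← lpow_add, lpow_rotate]

end Bordered

theorem properPower_iff_rotations_split_general (n : ℕ) (w : List (Letter n)) :
    (∃ (v : List (Letter n)) (m : ℕ), v ≠ [] ∧ 2 ≤ m ∧ w = lpow v m) ↔
    (∀ i : ℕ, ∃ t v : List (Letter n), t ≠ [] ∧ w.rotate i = t ++ v ++ t) := by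
  constructor
  · rintro ⟨v, m, hv, hm, rfl⟩ i
    exact exists_bordered_rotate_lpow hv hm i
  · exact exists_lpow_of_forall_rotate_bordered

/-- A nonempty cyclically reduced word `w` is a proper power iff every
cyclic rotation of `w` can be written as `t ++ v ++ t` with `t` nonempty. -/
theorem properPower_iff_rotations_split (n : ℕ) (w : List (Letter n)) (hw : w ≠ [])
    (hcr : CyclicallyReduced w) :
    (∃ (v : List (Letter n)) (m : ℕ), v ≠ [] ∧ 2 ≤ m ∧ w = lpow v m) ↔
    (∀ i : ℕ, ∃ t v : List (Letter n), t ≠ [] ∧ w.rotate i = t ++ v ++ t) :=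
  properPower_iff_rotations_split_general n w
end

section
/- Let q ≥ 2 and m ≥ 1. Let T be the set of finite lists over Fin q, partially ordered by the prefix relation, and order T × T componentwise. Let M = {(a,b) ∈ T × T : |a| = |b| = m}, and let X ⊆ {(a,b) ∈ T × T : |a| ≤ m and |b| ≤ m} be such that for every y ∈ M there is exactly one x ∈ X with x ≤ y. If the pair of empty lists is not in X, then X contains a full paradigm: there exist a ∈ T and b₀ ∈ T such that either {(a, b₀ ++ [i]) : i ∈ Fin q} ⊆ X or {(b₀ ++ [i], a) : i ∈ Fin q} ⊆ X. -/
/-!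
Write `⊑` for the prefix order. Pick `(a, b) ∈ X` with `|b|` maximal and, among those, `|a|`
maximal; after swapping the two coordinates we may assume `b = b₀ ++ [j]`. Maximality forces the
element of `X` below a leaf above `(a, b₀ ++ [i])` to be some `(c, b₀ ++ [i])` with `c ⊑ a`.
If `c = a` for every `i`, this is a full paradigm. Otherwise `c ⊏ a`, and then every leaf
`w ⊒ c` lies above some `(e, b) ∈ X` with `c ⊏ e`. The set `{e | (e, b) ∈ X}` is an antichain,
and an element of it of maximal length above `c` has all its siblings in it.
-/

variable {α : Type*}

theorem Set.exists_max_image_of_finite_image {β γ : Type*} [LinearOrder γ] {s : Set β}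
    (f : β → γ) (h : (f '' s).Finite) (hs : s.Nonempty) : ∃ x ∈ s, ∀ y ∈ s, f y ≤ f x := by
  obtain ⟨_, ⟨x, hx, rfl⟩, hmax⟩ := Set.exists_max_image (f '' s) id h (hs.image f)
  exact ⟨x, hx, fun y hy => hmax _ (Set.mem_image_of_mem f hy)⟩

theorem List.exists_prefix_length_eq [Nonempty α] {l : List α} {m : ℕ} (h : l.length ≤ m) :
    ∃ w, l <+: w ∧ w.length = m :=
  ⟨l ++ List.replicate (m - l.length) (Classical.arbitrary α), List.prefix_append _ _,
    by simp only [List.length_append, List.length_replicate]; omega⟩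

/-- Take an element `e₀ ++ [l]` of `Y` above `c` of maximal length: the element of `Y` below a
leaf above `e₀ ++ [k]` can be neither shorter (it would be a prefix of `e₀ ++ [l]`) nor longer. -/
theorem exists_forall_append_singleton_mem [Nonempty α] {m : ℕ} {Y : Set (List α)}
    {c : List α} (hc : c.length ≤ m) (hYm : ∀ e ∈ Y, e.length ≤ m)
    (hY : IsAntichain (· <+: ·) Y)
    (hcover : ∀ w, c <+: w → w.length = m → ∃ e ∈ Y, e <+: w ∧ c.length < e.length) :
    ∃ e₀, ∀ k, e₀ ++ [k] ∈ Y := by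
  have hcover' : ∀ w, c <+: w → w.length = m →
      ∃ e ∈ {e ∈ Y | c <+: e ∧ c.length < e.length}, e <+: w := by
    intro w hcw hw
    obtain ⟨e, he, hew, hlt⟩ := hcover w hcw hw
    exact ⟨e, ⟨he, List.prefix_of_prefix_length_le hcw hew hlt.le, hlt⟩, hew⟩
  obtain ⟨w, hcw, hw⟩ := List.exists_prefix_length_eq hc
  obtain ⟨e', ⟨he'Y, hce', hlt'⟩, hmax⟩ := Set.exists_max_image_of_finite_image List.length
    ((Set.finite_Iic m).subset (by rintro _ ⟨e, he, rfl⟩; exact hYm e he.1))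
    (let ⟨e, he, _⟩ := hcover' w hcw hw; ⟨e, he⟩)
  obtain rfl | ⟨e₀, l, rfl⟩ := List.eq_nil_or_concat' e'
  · simp at hlt'
  have hce₀ : c <+: e₀ :=
    List.prefix_of_prefix_length_le hce' (List.prefix_append _ _) (by simp at hlt'; omega)
  refine ⟨e₀, fun k => ?_⟩
  obtain ⟨w, hw, hwm⟩ := List.exists_prefix_length_eq (l := e₀ ++ [k]) (m := m) (by
    simpa using hYm _ he'Y)
  obtain ⟨e, he, hew⟩ := hcover' w ((hce₀.trans (List.prefix_append _ _)).trans hw) hwm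
  have hle : e.length ≤ e₀.length + 1 := by simpa using hmax e he
  rcases Nat.lt_or_ge e.length (e₀.length + 1) with hlt | hge
  · have hee₀ : e <+: e₀ :=
      List.prefix_of_prefix_length_le hew ((List.prefix_append _ _).trans hw) (by omega)
    have := hY.eq he.1 he'Y (hee₀.trans (List.prefix_append _ _))
    subst this
    simp at hlt
  · have : e = e₀ ++ [k] :=
      (List.prefix_of_prefix_length_le hew hw (by simp; omega)).eq_of_length (by simp; omega)
    exact this ▸ he.1

structure IsLeafPartition (m : ℕ) (X : Set (List α × List α)) : Prop where
  length_le : ∀ x ∈ X, x.1.length ≤ m ∧ x.2.length ≤ m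
  existsUnique : ∀ y : List α × List α, y.1.length = m → y.2.length = m →
    ∃! x, x ∈ X ∧ x.1 <+: y.1 ∧ x.2 <+: y.2

def HasFullParadigm (X : Set (List α × List α)) : Prop :=
  ∃ a b₀ : List α, (∀ i, (a, b₀ ++ [i]) ∈ X) ∨ (∀ i, (b₀ ++ [i], a) ∈ X)

theorem HasFullParadigm.of_preimage_swap {X : Set (List α × List α)}
    (h : HasFullParadigm (Prod.swap ⁻¹' X)) : HasFullParadigm X :=
  let ⟨a, b₀, h⟩ := h; ⟨a, b₀, h.symm⟩

namespace IsLeafPartition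

variable {m : ℕ} {X : Set (List α × List α)}

theorem preimage_swap (P : IsLeafPartition m X) : IsLeafPartition m (Prod.swap ⁻¹' X) where
  length_le x hx := (P.length_le _ hx).symm
  existsUnique y h₁ h₂ := by
    obtain ⟨x, ⟨hx, hx₁, hx₂⟩, huniq⟩ := P.existsUnique y.swap h₂ h₁
    refine ⟨x.swap, ⟨by simpa using hx, hx₂, hx₁⟩, fun x' ⟨hx', h₁', h₂'⟩ => ?_⟩
    rw [← Prod.swap_swap x', huniq x'.swap ⟨hx', h₂', h₁'⟩]

theorem exists_mem_prefix (P : IsLeafPartition m X) {u v : List α} (hu : u.length = m)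
    (hv : v.length = m) : ∃ x ∈ X, x.1 <+: u ∧ x.2 <+: v :=
  let ⟨x, hx, _⟩ := P.existsUnique (u, v) hu hv; ⟨x, hx⟩

theorem eq_of_prefix [Nonempty α] (P : IsLeafPartition m X) {a b a' b' u v : List α}
    (hu : u.length ≤ m) (hv : v.length ≤ m) (hx : (a, b) ∈ X) (hx' : (a', b') ∈ X)
    (ha : a <+: u) (hb : b <+: v) (ha' : a' <+: u) (hb' : b' <+: v) : (a, b) = (a', b') := by
  obtain ⟨u', hu', hu'm⟩ := List.exists_prefix_length_eq hu
  obtain ⟨v', hv', hv'm⟩ := List.exists_prefix_length_eq hv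
  exact (P.existsUnique (u', v') hu'm hv'm).unique ⟨hx, ha.trans hu', hb.trans hv'⟩
    ⟨hx', ha'.trans hu', hb'.trans hv'⟩

theorem exists_lex_max (P : IsLeafPartition m X) (hne : X.Nonempty) :
    ∃ a b, (a, b) ∈ X ∧
      ∀ x ∈ X, x.2.length < b.length ∨ x.2.length = b.length ∧ x.1.length ≤ a.length := by
  obtain ⟨⟨a, b⟩, hab, hmax⟩ := Set.exists_max_image_of_finite_image
    (fun x => toLex (x.2.length, x.1.length))
    (((Set.finite_Iic m).prod (Set.finite_Iic m)).image toLex |>.subset <| by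
      rintro _ ⟨x, hx, rfl⟩
      exact ⟨(x.2.length, x.1.length), ⟨(P.length_le x hx).2, (P.length_le x hx).1⟩, rfl⟩) hne
  exact ⟨a, b, hab, fun x hx => Prod.Lex.toLex_le_toLex.mp (hmax x hx)⟩

theorem isAntichain_fst [Nonempty α] (P : IsLeafPartition m X) (b : List α) :
    IsAntichain (· <+: ·) {e | (e, b) ∈ X} := fun _ he e' he' hne hee' =>
  hne (congrArg Prod.fst (P.eq_of_prefix (P.length_le _ he').1 (P.length_le _ he').2 he he'
    hee' (List.prefix_refl b) (List.prefix_refl e') (List.prefix_refl b)))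

theorem snd_eq_of_max_length [Nonempty α] (P : IsLeafPartition m X) {b₀ z w u d v : List α}
    {i k : α} (hmax : ∀ x ∈ X, x.2.length ≤ b₀.length + 1) (hz : (z, b₀ ++ [i]) ∈ X)
    (hzw : z <+: w) (hw : w.length ≤ m) (hx : (u, d) ∈ X) (huw : u <+: w) (hdv : d <+: v)
    (hkv : b₀ ++ [k] <+: v) : d = b₀ ++ [k] := by
  have hd : d.length ≤ b₀.length + 1 := hmax _ hx
  rcases Nat.lt_or_ge d.length (b₀.length + 1) with hlt | hge
  · have hdb₀ : d <+: b₀ :=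
      List.prefix_of_prefix_length_le hdv ((List.prefix_append _ _).trans hkv) (by omega)
    have := congrArg Prod.snd <| P.eq_of_prefix hw (P.length_le _ hz).2 hx hz huw
      (hdb₀.trans (List.prefix_append _ _)) hzw (List.prefix_refl _)
    simp only at this
    simp [this] at hlt
  · exact (List.prefix_of_prefix_length_le hdv hkv (by simp; omega)).eq_of_length
      (by simp; omega)

theorem exists_prefix_mem_sibling [Nonempty α] (P : IsLeafPartition m X) {a b₀ : List α} {j : α}
    (hab : (a, b₀ ++ [j]) ∈ X) (hmax₂ : ∀ x ∈ X, x.2.length ≤ b₀.length + 1)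
    (hmax₁ : ∀ x ∈ X, x.2.length = b₀.length + 1 → x.1.length ≤ a.length) (i : α) :
    ∃ c, c <+: a ∧ (c, b₀ ++ [i]) ∈ X := by
  obtain ⟨wa, ha, hwa⟩ := List.exists_prefix_length_eq (P.length_le _ hab).1
  obtain ⟨wb, hb, hwb⟩ := List.exists_prefix_length_eq (l := b₀ ++ [i]) (m := m)
    (by simpa using (P.length_le _ hab).2)
  obtain ⟨⟨c, d⟩, hx, hcw, hdw⟩ := P.exists_mem_prefix hwa hwb
  obtain rfl := P.snd_eq_of_max_length hmax₂ hab ha hwa.le hx hcw hdw hb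
  exact ⟨c, List.prefix_of_prefix_length_le hcw ha (hmax₁ _ hx (by simp)), hx⟩

theorem exists_longer_mem [Nonempty α] (P : IsLeafPartition m X) {a c b₀ w : List α} {i j : α}
    (hab : (a, b₀ ++ [j]) ∈ X) (hmax₂ : ∀ x ∈ X, x.2.length ≤ b₀.length + 1)
    (hc : (c, b₀ ++ [i]) ∈ X) (hca : c <+: a) (hne : c ≠ a) (hcw : c <+: w)
    (hw : w.length = m) : ∃ e ∈ {e | (e, b₀ ++ [j]) ∈ X}, e <+: w ∧ c.length < e.length := by
  obtain ⟨wb, hb, hwb⟩ := List.exists_prefix_length_eq (P.length_le _ hab).2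
  obtain ⟨⟨e, f⟩, hx, hew, hfw⟩ := P.exists_mem_prefix hw hwb
  obtain rfl := P.snd_eq_of_max_length hmax₂ hc hcw hw.le hx hew hfw hb
  refine ⟨e, hx, hew, ?_⟩
  by_contra! hle
  have hec : e <+: c := List.prefix_of_prefix_length_le hew hcw hle
  have hea : e = a := congrArg Prod.fst <| P.eq_of_prefix (P.length_le _ hab).1
    (P.length_le _ hab).2 hx hab (hec.trans hca) (List.prefix_refl _) (List.prefix_refl _)
    (List.prefix_refl _)
  exact hne (hca.eq_of_length (le_antisymm hca.length_le (hea ▸ hec.length_le)))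

theorem hasFullParadigm_of_snd_ne_nil [Nonempty α] (P : IsLeafPartition m X)
    (h : ∃ x ∈ X, x.2 ≠ []) : HasFullParadigm X := by
  obtain ⟨a, b, hab, hmax⟩ := P.exists_lex_max (let ⟨x, hx, _⟩ := h; ⟨x, hx⟩)
  obtain rfl | ⟨b₀, j, rfl⟩ := List.eq_nil_or_concat' b
  · obtain ⟨x, hx, hx₂⟩ := h
    simpa [hx₂] using hmax x hx
  simp only [List.length_append, List.length_singleton] at hmax
  have hmax₂ : ∀ x ∈ X, x.2.length ≤ b₀.length + 1 := fun x hx => by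
    rcases hmax x hx with h | h <;> omega
  have hmax₁ : ∀ x ∈ X, x.2.length = b₀.length + 1 → x.1.length ≤ a.length := fun x hx hx₂ => by
    rcases hmax x hx with h | h <;> omega
  by_cases hall : ∀ i, (a, b₀ ++ [i]) ∈ X
  · exact ⟨a, b₀, .inl hall⟩
  obtain ⟨i, hi⟩ := not_forall.mp hall
  obtain ⟨c, hca, hc⟩ := P.exists_prefix_mem_sibling hab hmax₂ hmax₁ i
  have hne : c ≠ a := by rintro rfl; exact hi hc
  obtain ⟨e₀, he₀⟩ := exists_forall_append_singleton_mem
    (hca.length_le.trans (P.length_le _ hab).1) (fun e he => (P.length_le _ he).1)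
    (P.isAntichain_fst _) (fun w hcw hw => P.exists_longer_mem hab hmax₂ hc hca hne hcw hw)
  exact ⟨b₀ ++ [j], e₀, .inr he₀⟩

theorem hasFullParadigm [Nonempty α] (P : IsLeafPartition m X) (hroot : ([], []) ∉ X) :
    HasFullParadigm X := by
  obtain ⟨w, -, hw⟩ := List.exists_prefix_length_eq (α := α) (l := []) (Nat.zero_le m)
  obtain ⟨⟨u, v⟩, hx, -⟩ := P.exists_mem_prefix hw hw
  rcases eq_or_ne v [] with rfl | hv
  · have hu : u ≠ [] := by rintro rfl; exact hroot hx
    exact (P.preimage_swap.hasFullParadigm_of_snd_ne_nil ⟨([], u), hx, hu⟩).of_preimage_swap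
  · exact P.hasFullParadigm_of_snd_ne_nil ⟨(u, v), hx, hv⟩

end IsLeafPartition

theorem exists_full_paradigm_general (q m : ℕ) (hq : 2 ≤ q)
    (X : Set (List (Fin q) × List (Fin q)))
    (hX : X ⊆ {p : List (Fin q) × List (Fin q) | p.1.length ≤ m ∧ p.2.length ≤ m})
    (huniq : ∀ y : List (Fin q) × List (Fin q), y.1.length = m → y.2.length = m →
      ∃! x : List (Fin q) × List (Fin q), x ∈ X ∧ x.1 <+: y.1 ∧ x.2 <+: y.2)
    (hroot : (([], []) : List (Fin q) × List (Fin q)) ∉ X) :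
    ∃ a b₀ : List (Fin q),
      (∀ i : Fin q, (a, b₀ ++ [i]) ∈ X) ∨ (∀ i : Fin q, (b₀ ++ [i], a) ∈ X) :=
  haveI : Nonempty (Fin q) := ⟨⟨0, by omega⟩⟩
  IsLeafPartition.hasFullParadigm ⟨fun _ hx => hX hx, huniq⟩ hroot

/-- Let `T` be the set of finite lists over `Fin q` (the rooted
`q`-regular tree, ordered by the prefix relation), `q ≥ 2`, `m ≥ 1`. If
`X ⊆ {(a,b) : |a|,|b| ≤ m}` is such that every `(a,b)` with `|a| = |b| = m` lies above
exactly one element of `X`, and the pair of empty lists is not in `X`, then `X`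
contains a full paradigm. -/
theorem exists_full_paradigm (q m : ℕ) (hq : 2 ≤ q) (hm : 1 ≤ m)
    (X : Set (List (Fin q) × List (Fin q)))
    (hX : X ⊆ {p : List (Fin q) × List (Fin q) | p.1.length ≤ m ∧ p.2.length ≤ m})
    (huniq : ∀ y : List (Fin q) × List (Fin q), y.1.length = m → y.2.length = m →
      ∃! x : List (Fin q) × List (Fin q), x ∈ X ∧ x.1 <+: y.1 ∧ x.2 <+: y.2)
    (hroot : (([], []) : List (Fin q) × List (Fin q)) ∉ X) :
    ∃ a b₀ : List (Fin q),
      (∀ i : Fin q, (a, b₀ ++ [i]) ∈ X) ∨ (∀ i : Fin q, (b₀ ++ [i], a) ∈ X) :=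
  exists_full_paradigm_general q m hq X hX huniq hroot
end

section
/- Let n ≥ 2 and let φ be the automorphism of F_n with φ(x₁) = x₁x₂ and φ(xᵢ) = xᵢ for all i ≠ 1 (a Nielsen move). If u, v ∈ F_n are such that the concatenation of their reduced words is reduced (no cancellation between the last letter of u and the first letter of v), then |φ(uv)| ≥ |φ(u)| + |φ(v)| − 2; that is, at most one letter of φ(u) and one letter of φ(v) cancel in the product φ(u)φ(v). -/
/-!
Substitute `x_a ↦ x_a x_b` letter by letter in a reduced word `w`. The only cancellations
happen inside the images `x_a x_b x_b⁻¹` and `x_b x_b⁻¹ x_a⁻¹` of the subwords `x_a x_b⁻¹`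
and `x_b x_a⁻¹`, and once these collapse to `x_a` and `x_a⁻¹` the word is reduced. Hence
`|φ(w)| = |w| + #_a(w) - 2 c(w)`, where `#_a` counts the letters `x_a^{±1}` and `c` counts the
two subwords. If `uv` is reduced, `|·|` and `#_a` are additive on it, while
`c(uv) ≤ c(u) + c(v) + 1` because only one new subword can straddle the junction.
-/

namespace FreeGroup

theorem _root_.MonoidHom.map_mk_eq_mk_flatMap {α β : Type*} (f : FreeGroup α →* FreeGroup β)
    (w : α × Bool → List (β × Bool)) (hw : ∀ p, f (mk [p]) = mk (w p)) (L : List (α × Bool)) :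
    f (mk L) = mk (L.flatMap w) := by
  induction L with
  | nil => exact f.map_one
  | cons p L ih =>
    rw [List.flatMap_cons, ← mul_mk, ← ih, ← hw, ← _root_.map_mul, mul_mk, List.singleton_append]

variable {α : Type*} [DecidableEq α] {a b : α}

variable (a b) in
def nielsenLetter (p : α × Bool) : List (α × Bool) :=
  if p.1 = a then (if p.2 then [(a, true), (b, true)] else [(b, false), (a, false)]) else [p]

variable (a b) in
abbrev IsNielsenCancelling (p q : α × Bool) : Prop :=
  (p = (a, true) ∧ q = (b, false)) ∨ (p = (b, true) ∧ q = (a, false))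

variable (a b) in
def nielsenCancellations : List (α × Bool) → ℕ
  | p :: q :: l => (if IsNielsenCancelling a b p q then 1 else 0) + nielsenCancellations (q :: l)
  | _ => 0

variable (a b) in
def nielsenWord : List (α × Bool) → List (α × Bool)
  | [] => []
  | [p] => nielsenLetter a b p
  | p :: q :: l =>
    if p = (a, true) ∧ q = (b, false) then (a, true) :: nielsenWord l
    else if p = (b, true) ∧ q = (a, false) then (a, false) :: nielsenWord l
    else nielsenLetter a b p ++ nielsenWord (q :: l)

theorem mk_nielsenWord (hab : a ≠ b) (L : List (α × Bool)) :
    mk (nielsenWord a b L) = mk (L.flatMap (nielsenLetter a b)) := by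
  induction L using nielsenWord.induct a b with
  | case1 => rfl
  | case2 p => simp [nielsenWord]
  | case3 p q l h ih =>
    obtain ⟨rfl, rfl⟩ := h
    simp [nielsenWord, nielsenLetter, hab.symm]
    rw [← List.singleton_append, ← mul_mk, ih, mul_mk]
    exact (Quot.sound (Red.Step.not (L₁ := [(a, true)]))).symm
  | case4 p q l h₁ h₂ ih =>
    obtain ⟨rfl, rfl⟩ := h₂
    simp [nielsenWord, nielsenLetter, hab.symm]
    rw [← List.singleton_append, ← mul_mk, ih, mul_mk]
    exact (Quot.sound (Red.Step.not (L₁ := []))).symm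
  | case5 p q l h₁ h₂ ih =>
    simp only [nielsenWord, if_neg h₁, if_neg h₂, ← mul_mk, ih, List.flatMap_cons]

variable (a b) in
theorem nielsenCancellations_cons_of_snd_eq_false (l : List (α × Bool)) {p : α × Bool}
    (hp : p.2 = false) : nielsenCancellations a b (p :: l) = nielsenCancellations a b l := by
  cases l <;> simp_all [nielsenCancellations, Prod.ext_iff]

theorem length_nielsenWord_add (hab : a ≠ b) (L : List (α × Bool)) :
    (nielsenWord a b L).length + 2 * nielsenCancellations a b L =
      L.length + L.countP (·.1 = a) := by
  induction L using nielsenWord.induct a b with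
  | case1 => rfl
  | case2 p =>
    unfold nielsenWord nielsenLetter nielsenCancellations
    split_ifs <;> simp_all
  | case3 p q l h ih =>
    obtain ⟨rfl, rfl⟩ := h
    simp [nielsenWord, nielsenCancellations, nielsenCancellations_cons_of_snd_eq_false, hab.symm,
      IsNielsenCancelling]
    omega
  | case4 p q l h₁ h₂ ih =>
    obtain ⟨rfl, rfl⟩ := h₂
    simp [nielsenWord, nielsenCancellations, nielsenCancellations_cons_of_snd_eq_false, hab.symm,
      IsNielsenCancelling]
    omega
  | case5 p q l h₁ h₂ ih =>
    simp only [nielsenWord, nielsenCancellations, IsNielsenCancelling, h₁, h₂, or_self, if_false,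
      List.length_append, List.countP_cons, List.length_cons]
    unfold nielsenLetter
    split_ifs <;> simp_all <;> omega

variable (a b) in
theorem head?_nielsenLetter (p : α × Bool) :
    (nielsenLetter a b p).head? = some (if p = (a, false) then (b, false) else p) := by
  obtain ⟨x, s⟩ := p
  unfold nielsenLetter
  split_ifs <;> simp_all

variable (a b) in
theorem getLast?_nielsenLetter (p : α × Bool) :
    (nielsenLetter a b p).getLast? = some (if p = (a, true) then (b, true) else p) := by
  obtain ⟨x, s⟩ := p
  unfold nielsenLetter
  split_ifs <;> simp_all

variable (a b) in
theorem head?_nielsenWord_cons (q : α × Bool) (l : List (α × Bool)) :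
    (nielsenWord a b (q :: l)).head? = some (if q = (a, false) then (b, false) else q) ∨
      q = (b, true) ∧ (nielsenWord a b (q :: l)).head? = some (a, false) := by
  cases l with
  | nil => simp [nielsenWord, head?_nielsenLetter]
  | cons r l =>
    by_cases h₁ : q = (a, true) ∧ r = (b, false)
    · simp [nielsenWord, h₁]
    by_cases h₂ : q = (b, true) ∧ r = (a, false)
    · rw [nielsenWord, if_neg h₁, if_pos h₂]
      exact Or.inr ⟨h₂.1, rfl⟩
    · left
      rw [nielsenWord, if_neg h₁, if_neg h₂, List.head?_append, head?_nielsenLetter]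
      rfl

theorem isReduced_nielsenLetter (hab : a ≠ b) (p : α × Bool) :
    IsReduced (nielsenLetter a b p) := by
  unfold nielsenLetter
  split_ifs <;> simp [IsReduced, hab, hab.symm]

theorem isReduced_nielsenLetter_append_nielsenWord (hab : a ≠ b) {p q : α × Bool}
    {l : List (α × Bool)} (hpq : p.1 = q.1 → p.2 = q.2) (hc : ¬IsNielsenCancelling a b p q)
    (hq : IsReduced (nielsenWord a b (q :: l))) :
    IsReduced (nielsenLetter a b p ++ nielsenWord a b (q :: l)) := by
  refine List.isChain_append.2 ⟨isReduced_nielsenLetter hab p, hq, fun x hx y hy => ?_⟩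
  rw [getLast?_nielsenLetter, Option.mem_some_iff] at hx
  rcases head?_nielsenWord_cons a b q l with h | ⟨rfl, h⟩ <;>
    rw [h, Option.mem_some_iff] at hy <;> subst hx hy <;> split_ifs <;> grind

theorem isReduced_nielsenWord (hab : a ≠ b) {L : List (α × Bool)} (hL : IsReduced L) :
    IsReduced (nielsenWord a b L) := by
  induction L using nielsenWord.induct a b with
  | case1 => exact hL
  | case2 p => exact isReduced_nielsenLetter hab p
  | case3 p q l h ih =>
    obtain ⟨rfl, rfl⟩ := h
    rw [isReduced_cons_cons] at hL
    simp only [nielsenWord, and_self, if_true]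
    refine List.isChain_cons.2 ⟨?_, ih hL.2.tail⟩
    cases l with
    | nil => simp [nielsenWord]
    | cons r l =>
      have hr := (isReduced_cons_cons.1 hL.2).1
      rcases head?_nielsenWord_cons a b r l with h | ⟨rfl, h⟩ <;> rw [h] <;> grind
  | case4 p q l h₁ h₂ ih =>
    obtain ⟨rfl, rfl⟩ := h₂
    rw [isReduced_cons_cons] at hL
    simp only [nielsenWord, h₁, if_false, and_self, if_true]
    refine List.isChain_cons.2 ⟨?_, ih hL.2.tail⟩
    cases l with
    | nil => simp [nielsenWord]
    | cons r l =>
      have hr := (isReduced_cons_cons.1 hL.2).1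
      rcases head?_nielsenWord_cons a b r l with h | ⟨rfl, h⟩ <;> rw [h] <;> grind
  | case5 p q l h₁ h₂ ih =>
    rw [isReduced_cons_cons] at hL
    simp only [nielsenWord, if_neg h₁, if_neg h₂]
    exact isReduced_nielsenLetter_append_nielsenWord hab hL.1 (not_or.2 ⟨h₁, h₂⟩) (ih hL.2)

variable (a b) in
theorem nielsenCancellations_append_le (L₁ L₂ : List (α × Bool)) :
    nielsenCancellations a b (L₁ ++ L₂) ≤
      nielsenCancellations a b L₁ + nielsenCancellations a b L₂ + 1 := by
  induction L₁ with
  | nil => simp [nielsenCancellations]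
  | cons p L ih =>
    cases L with
    | nil =>
      cases L₂ with
      | nil => simp [nielsenCancellations]
      | cons q l =>
        simp only [List.cons_append, List.nil_append, nielsenCancellations]
        split_ifs <;> omega
    | cons q l =>
      simp only [List.cons_append, nielsenCancellations] at ih ⊢
      omega

theorem toWord_mk_flatMap_nielsenLetter (hab : a ≠ b) {L : List (α × Bool)} (hL : IsReduced L) :
    (mk (L.flatMap (nielsenLetter a b))).toWord = nielsenWord a b L := by
  rw [← mk_nielsenWord hab, toWord_mk, (isReduced_nielsenWord hab hL).reduce_eq]

theorem map_mk_eq_mk_flatMap_nielsenLetter (f : FreeGroup α →* FreeGroup α)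
    (hfa : f (of a) = of a * of b) (hf : ∀ x, x ≠ a → f (of x) = of x) (L : List (α × Bool)) :
    f (mk L) = mk (L.flatMap (nielsenLetter a b)) := by
  have h_of : ∀ x, f (mk [(x, true)]) = mk (nielsenLetter a b (x, true)) := by
    intro x
    by_cases hx : x = a
    · subst hx
      simp only [nielsenLetter, if_true]
      exact hfa
    · simp only [nielsenLetter, hx, if_false]
      exact hf x hx
  refine f.map_mk_eq_mk_flatMap _ (fun ⟨x, s⟩ => ?_) L
  cases s
  · have hinv : nielsenLetter a b (x, false) = invRev (nielsenLetter a b (x, true)) := by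
      by_cases hx : x = a <;> simp [nielsenLetter, hx, invRev]
    rw [hinv, ← inv_mk, ← h_of, ← _root_.map_inv, inv_mk]
    rfl
  · exact h_of x

theorem norm_map_add_two_mul_nielsenCancellations (hab : a ≠ b) (f : FreeGroup α →* FreeGroup α)
    (hfa : f (of a) = of a * of b) (hf : ∀ x, x ≠ a → f (of x) = of x) (x : FreeGroup α) :
    norm (f x) + 2 * nielsenCancellations a b x.toWord = norm x + x.toWord.countP (·.1 = a) := by
  rw [norm, norm, ← length_nielsenWord_add hab,
    ← toWord_mk_flatMap_nielsenLetter hab isReduced_toWord,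
    ← map_mk_eq_mk_flatMap_nielsenLetter f hfa hf, mk_toWord]

theorem toWord_mul_of_norm_mul {u v : FreeGroup α} (h : norm (u * v) = norm u + norm v) :
    (u * v).toWord = u.toWord ++ v.toWord :=
  (toWord_mul_sublist u v).eq_of_length (by rw [List.length_append]; exact h)

theorem norm_add_norm_le_norm_map_mul_add_two (hab : a ≠ b) (f : FreeGroup α →* FreeGroup α)
    (hfa : f (of a) = of a * of b) (hf : ∀ x, x ≠ a → f (of x) = of x) {u v : FreeGroup α}
    (huv : norm (u * v) = norm u + norm v) :
    norm (f u) + norm (f v) ≤ norm (f (u * v)) + 2 := by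
  have hu := norm_map_add_two_mul_nielsenCancellations hab f hfa hf u
  have hv := norm_map_add_two_mul_nielsenCancellations hab f hfa hf v
  have hw := norm_map_add_two_mul_nielsenCancellations hab f hfa hf (u * v)
  have hle := nielsenCancellations_append_le a b u.toWord v.toWord
  rw [toWord_mul_of_norm_mul huv, List.countP_append] at hw
  omega

end FreeGroup

/-- bounded cancellation for a Nielsen move. For the automorphism
`φ` of `F_n` with `φ(x₁) = x₁x₂`, `φ(xᵢ) = xᵢ` (`i ≠ 1`): if there is no cancellation
in the product `u·v`, then `|φ(uv)| ≥ |φ(u)| + |φ(v)| - 2`. -/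
theorem nielsen_bounded_cancellation (n : ℕ) (hn : 2 ≤ n)
    (φ : FreeGroup (Fin n) ≃* FreeGroup (Fin n))
    (h1 : φ (FreeGroup.of (⟨0, by omega⟩ : Fin n)) =
      FreeGroup.of (⟨0, by omega⟩ : Fin n) * FreeGroup.of (⟨1, by omega⟩ : Fin n))
    (h2 : ∀ i : Fin n, i.val ≠ 0 → φ (FreeGroup.of i) = FreeGroup.of i)
    (u v : FreeGroup (Fin n))
    (huv : (u * v).toWord.length = u.toWord.length + v.toWord.length) :
    (φ u).toWord.length + (φ v).toWord.length ≤ (φ (u * v)).toWord.length + 2 := by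
  have hab : (⟨0, by omega⟩ : Fin n) ≠ ⟨1, by omega⟩ := by simp
  exact FreeGroup.norm_add_norm_le_norm_map_mul_add_two hab φ.toMonoidHom h1
    (fun i hi => h2 i fun h => hi (Fin.ext h)) huv
end
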